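/- Given algebraic (or more generally complex) numbers a₁,…,a_d spanning a ℚ-vector space, there exist positive rational numbers λ₁,…,λ_d such that for all integers n₁,…,n_d: n₁a₁+⋯+n_da_d = 0 if and only if λ₁^{n₁}⋯λ_d^{n_d} = 1. -/

import Mathlib

/-!
Let `W` be the subgroup of `ℂ` generated by the `aᵢ`. Being finitely generated and torsion-free,
`W` is free abelian with a finite basis `(b_j)`, so an integer relation `∑ nᵢ aᵢ = 0` holds iff
every coordinate `∑ᵢ nᵢ Nᵢⱼ` vanishes, where `aᵢ = ∑ⱼ Nᵢⱼ b_j` with `Nᵢⱼ ∈ ℤ`. Sending `b_j` to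
distinct primes `p_j`, i.e. taking `λᵢ = ∏ⱼ p_j ^ Nᵢⱼ`, turns these coordinates into the
exponents of `∏ᵢ λᵢ ^ nᵢ = ∏ⱼ p_j ^ (∑ᵢ nᵢ Nᵢⱼ)`, and by unique factorisation in `ℚ` this product
is `1` iff all exponents vanish.
-/

open Finset Function

theorem prod_zpow_eq_zpow_sum₀ {ι G₀ : Type*} [CommGroupWithZero G₀] {a : G₀} (ha : a ≠ 0)
    (s : Finset ι) (f : ι → ℤ) : ∏ i ∈ s, a ^ f i = a ^ ∑ i ∈ s, f i := by
  induction s using Finset.cons_induction with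
  | empty => simp
  | cons i s hi ih => rw [prod_cons, sum_cons, ih, zpow_add₀ ha]

theorem prod_zpow_prod_zpow₀ {ι κ G₀ : Type*} [Fintype ι] [Fintype κ] [CommGroupWithZero G₀]
    {x : κ → G₀} (hx : ∀ j, x j ≠ 0) (N : ι → κ → ℤ) (n : ι → ℤ) :
    ∏ i, (∏ j, x j ^ N i j) ^ n i = ∏ j, x j ^ ∑ i, n i * N i j := calc
  ∏ i, (∏ j, x j ^ N i j) ^ n i = ∏ i, ∏ j, x j ^ (n i * N i j) := by
    simp only [← prod_zpow, ← zpow_mul, mul_comm]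
  _ = ∏ j, x j ^ ∑ i, n i * N i j := by
    rw [prod_comm]
    exact prod_congr rfl fun j _ => prod_zpow_eq_zpow_sum₀ (hx j) _ _

theorem padicValRat_prod_zpow {κ : Type*} (p : ℕ) [Fact p.Prime] (s : Finset κ) {x : κ → ℚ}
    (hx : ∀ j, x j ≠ 0) (e : κ → ℤ) :
    padicValRat p (∏ j ∈ s, x j ^ e j) = ∑ j ∈ s, e j * padicValRat p (x j) := by
  induction s using Finset.cons_induction with
  | empty => simp
  | cons j s hj ih =>
    rw [prod_cons, sum_cons, padicValRat.mul (zpow_ne_zero _ (hx j))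
      (prod_ne_zero_iff.2 fun k _ => zpow_ne_zero _ (hx k)), padicValRat.zpow, ih]

theorem padicValRat_natCast_prime {p q : ℕ} [Fact p.Prime] (hq : q.Prime) :
    padicValRat p q = if p = q then 1 else 0 := by
  split_ifs with h
  · subst h
    exact padicValRat.self (Fact.out : p.Prime).one_lt
  · have : Fact q.Prime := ⟨hq⟩
    rw [padicValRat.of_nat, padicValNat_primes h, Nat.cast_zero]

theorem prod_primes_zpow_eq_one_iff {κ : Type*} [Fintype κ] {p : κ → ℕ} (hp : ∀ j, (p j).Prime)
    (hinj : Injective p) {e : κ → ℤ} : ∏ j, (p j : ℚ) ^ e j = 1 ↔ e = 0 := by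
  classical
  refine ⟨fun h => funext fun k => ?_, fun h => by simp [h]⟩
  have : Fact (p k).Prime := ⟨hp k⟩
  have hval := congrArg (padicValRat (p k)) h
  rw [padicValRat_prod_zpow _ _ (fun j => Nat.cast_ne_zero.2 (hp j).ne_zero), padicValRat.one]
    at hval
  simpa [padicValRat_natCast_prime (hp _), hinj.eq_iff] using hval

theorem exists_injective_primes (κ : Type*) [Finite κ] :
    ∃ p : κ → ℕ, (∀ j, (p j).Prime) ∧ Injective p := by
  obtain ⟨n, ⟨e⟩⟩ := Finite.exists_equiv_fin κ
  let f : κ ↪ Nat.Primes := e.toEmbedding.trans (Fin.valEmbedding.trans (Infinite.natEmbedding _))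
  exact ⟨fun j => f j, fun j => (f j).prop, Subtype.val_injective.comp f.injective⟩

theorem exists_pos_rat_zpow_eq_one_iff_sum_zsmul_eq_zero {ι A : Type*} [Fintype ι]
    [AddCommGroup A] [IsAddTorsionFree A] (v : ι → A) :
    ∃ lam : ι → ℚ, (∀ i, 0 < lam i) ∧
      ∀ n : ι → ℤ, (∑ i, n i • v i = 0 ↔ ∏ i, lam i ^ n i = 1) := by
  let W := Submodule.span ℤ (Set.range v)
  have : Module.Finite ℤ W := .span_of_finite ℤ (Set.finite_range v)
  let b := Module.Free.chooseBasis ℤ W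
  let w : ι → W := fun i => ⟨v i, Submodule.subset_span (Set.mem_range_self i)⟩
  obtain ⟨p, hp, hinj⟩ := exists_injective_primes (Module.Free.ChooseBasisIndex ℤ W)
  refine ⟨fun i => ∏ j, (p j : ℚ) ^ b.repr (w i) j,
    fun i => prod_pos fun j _ => zpow_pos (Nat.cast_pos.2 (hp j).pos) _, fun n => ?_⟩
  have hcoord : ∑ i, n i • v i = 0 ↔ (fun j => ∑ i, n i * b.repr (w i) j) = 0 := by
    have hsum : ∑ i, n i • v i = ((∑ i, n i • w i : W) : A) := by simp [w]
    rw [hsum, ZeroMemClass.coe_eq_zero, ← b.repr.map_eq_zero_iff, ← DFunLike.coe_fn_eq]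
    simp [funext_iff]
  rw [hcoord, prod_zpow_prod_zpow₀ (fun j => Nat.cast_ne_zero.2 (hp j).ne_zero),
    prod_primes_zpow_eq_one_iff hp hinj]

/-- Given complex numbers `a₁,…,a_d`, there exist positive rationals `λ₁,…,λ_d`
whose multiplicative relations are exactly the additive relations of the `aᵢ`. -/
theorem additive_to_multiplicative_relations (d : ℕ) (a : Fin d → ℂ) :
    ∃ lam : Fin d → ℚ, (∀ i, 0 < lam i) ∧
      ∀ n : Fin d → ℤ,
        (∑ i, (n i : ℂ) * a i = 0 ↔ ∏ i, lam i ^ (n i) = 1) := by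
  simpa only [zsmul_eq_mul] using exists_pos_rat_zpow_eq_one_iff_sum_zsmul_eq_zero a
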